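/- For any m and any digit shift σ ∈ {0,1}^m, the digit-shifted Van der Corput set, consisting of all 2^m points (0.x₁…x_m, 0.y_m…y₁) with y_k = x_k + σ_k (mod 2), is a binary (0,m,2)-net. -/

import Mathlib

open Finset

/-- The dyadic rectangle `[m₁/2^k₁,(m₁+1)/2^k₁) × [m₂/2^k₂,(m₂+1)/2^k₂)` as a subset of the plane. -/
def dyadicRect (k₁ m₁ k₂ m₂ : ℕ) : Set (ℝ × ℝ) :=
  Set.Ico ((m₁ : ℝ) / 2 ^ k₁) (((m₁ : ℝ) + 1) / 2 ^ k₁) ×ˢ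
    Set.Ico ((m₂ : ℝ) / 2 ^ k₂) (((m₂ : ℝ) + 1) / 2 ^ k₂)

/-- The point `(0.x₁x₂…x_m, 0.y_m y_{m-1}…y₁)` of the digit-shifted Van der Corput set, where
`y_k = x_k + σ_k (mod 2)`, determined by the binary digits `x : Fin m → ℕ` and the digit
shift `σ : Fin m → ℕ` (zero-based indices). -/
noncomputable def shiftedVdcPoint (m : ℕ) (σ x : Fin m → ℕ) : ℝ × ℝ :=
  (∑ i, (x i : ℝ) / 2 ^ ((i : ℕ) + 1),
   ∑ i, (((x i + σ i) % 2 : ℕ) : ℝ) * 2 ^ (i : ℕ) / 2 ^ m)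

/-! Write the point as `(A / 2^m, B / 2^m)` with `A = Σ x_i 2^(m-1-i)` and `B = Σ y_i 2^i`; in
`Fin 2` the digit shift is plain addition `y = x + σ`. The point lies in the dyadic rectangle
with corner `(a / 2^j, b / 2^(m-j))` iff `A / 2^(m-j) = a` and `B / 2^j = b` (integer division).
These two quotients read off the digits `x_1, …, x_j` and `y_{j+1}, …, y_m`, which together
determine `x`; so `x ↦ (A / 2^(m-j), B / 2^j)` is injective, hence bijective, both sides having
`2^m` elements. -/

theorem Nat.cast_div_mul_mem_Ico_iff {K : Type*} [Semifield K] [LinearOrder K]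
    [IsStrictOrderedRing K] [FloorSemiring K] {A a c d : ℕ} (hc : 0 < c) :
    (A : K) / (c * d) ∈ Set.Ico ((a : K) / c) ((a + 1) / c) ↔ A / d = a := by
  have hc' : (0 : K) < c := by exact_mod_cast hc
  rw [← Nat.floor_div_eq_div (K := K), Nat.floor_eq_iff (by positivity), Set.mem_Ico,
    mul_comm (c : K), ← div_div, div_le_div_iff_of_pos_right hc',
    div_lt_div_iff_of_pos_right hc']

theorem Nat.cast_div_two_pow_add_mem_Ico_iff {K : Type*} [Semifield K] [LinearOrder K]
    [IsStrictOrderedRing K] [FloorSemiring K] {A a k l : ℕ} :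
    (A : K) / 2 ^ (k + l) ∈ Set.Ico ((a : K) / 2 ^ k) ((a + 1) / 2 ^ k) ↔ A / 2 ^ l = a := by
  have := Nat.cast_div_mul_mem_Ico_iff (K := K) (A := A) (a := a) (d := 2 ^ l)
    (Nat.two_pow_pos k)
  push_cast at this
  rwa [pow_add]

theorem finFunctionFinEquiv_div_pow_mod {b n : ℕ} (f : Fin n → Fin b) (i : Fin n) :
    (finFunctionFinEquiv f : ℕ) / b ^ (i : ℕ) % b = f i := by
  conv_rhs => rw [← finFunctionFinEquiv.symm_apply_apply f]
  rfl

theorem apply_eq_of_finFunctionFinEquiv_div_pow_eq {b n k : ℕ} {f g : Fin n → Fin b}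
    (h : (finFunctionFinEquiv f : ℕ) / b ^ k = (finFunctionFinEquiv g : ℕ) / b ^ k)
    {i : Fin n} (hi : k ≤ i) : f i = g i := by
  have digit (f : Fin n → Fin b) :
      (f i : ℕ) = (finFunctionFinEquiv f : ℕ) / b ^ k / b ^ (i - k : ℕ) % b := by
    rw [Nat.div_div_eq_div_mul, ← pow_add, Nat.add_sub_cancel' hi,
      finFunctionFinEquiv_div_pow_mod]
  exact Fin.ext (by rw [digit f, digit g, h])

namespace ShiftedVdc

variable {m : ℕ}

def fstNumerator (x : Fin m → Fin 2) : Fin (2 ^ m) := finFunctionFinEquiv (x ∘ Fin.rev)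

def sndNumerator (σ : Fin m → ℕ) (x : Fin m → Fin 2) : Fin (2 ^ m) :=
  finFunctionFinEquiv fun i => x i + Fin.ofNat 2 (σ i)

theorem sndNumerator_injective (σ : Fin m → ℕ) : Function.Injective (sndNumerator σ) :=
  fun _ _ h => funext fun i => add_right_cancel (congrFun (finFunctionFinEquiv.injective h) i)

theorem shiftedVdcPoint_eq (σ : Fin m → ℕ) (x : Fin m → Fin 2) :
    shiftedVdcPoint m σ (fun i => x i) =
      ((fstNumerator x : ℝ) / 2 ^ m, (sndNumerator σ x : ℝ) / 2 ^ m) := by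
  simp only [shiftedVdcPoint, Prod.mk.injEq]
  constructor
  · have hrev : (fstNumerator x : ℕ) = ∑ i, (x i : ℕ) * 2 ^ (m - (i + 1)) := by
      rw [fstNumerator, finFunctionFinEquiv_apply]
      exact Fintype.sum_equiv Fin.revPerm _ _ fun i => by
        simp only [Function.comp_apply, Fin.revPerm_apply, Fin.val_rev]; congr 2; omega
    push_cast [hrev, Finset.sum_div]
    refine Finset.sum_congr rfl fun i _ => ?_
    rw [← pow_sub_mul_pow (2 : ℝ) (show (i : ℕ) + 1 ≤ m from i.isLt)]
    field_simp
  · rw [sndNumerator, finFunctionFinEquiv_apply, Nat.cast_sum, Finset.sum_div]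
    refine Finset.sum_congr rfl fun i _ => ?_
    simp [Fin.val_add]

theorem shiftedVdcPoint_injective (σ : Fin m → ℕ) :
    Function.Injective fun x : Fin m → Fin 2 => shiftedVdcPoint m σ (fun i => x i) := by
  intro x y h
  simp only [shiftedVdcPoint_eq, Prod.mk.injEq] at h
  refine sndNumerator_injective σ (Fin.ext ?_)
  exact_mod_cast (div_left_inj' (by positivity)).1 h.2

def rectIndex (σ : Fin m → ℕ) {j : ℕ} (hj : j ≤ m) (x : Fin m → Fin 2) :
    Fin (2 ^ j) × Fin (2 ^ (m - j)) :=
  (⟨fstNumerator x / 2 ^ (m - j), Nat.div_lt_of_lt_mul <| by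
      rw [← pow_add, Nat.sub_add_cancel hj]; exact (fstNumerator x).isLt⟩,
   ⟨sndNumerator σ x / 2 ^ j, Nat.div_lt_of_lt_mul <| by
      rw [← pow_add, Nat.add_sub_cancel' hj]; exact (sndNumerator σ x).isLt⟩)

theorem rectIndex_bijective (σ : Fin m → ℕ) {j : ℕ} (hj : j ≤ m) :
    Function.Bijective (rectIndex σ hj) := by
  refine (Fintype.bijective_iff_injective_and_card _).2 ⟨fun x y h => ?_, ?_⟩
  · simp only [rectIndex, Prod.mk.injEq, Fin.mk.injEq] at h
    funext i
    rcases lt_or_ge (i : ℕ) j with hij | hij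
    · simpa using apply_eq_of_finFunctionFinEquiv_div_pow_eq h.1 (i := Fin.rev i)
        (by rw [Fin.val_rev]; omega)
    · exact add_right_cancel (apply_eq_of_finFunctionFinEquiv_div_pow_eq h.2 hij)
  · simp [← pow_add, Nat.add_sub_cancel' hj]

theorem shiftedVdcPoint_mem_dyadicRect_iff (σ : Fin m → ℕ) {j a b : ℕ} (hj : j ≤ m)
    (ha : a < 2 ^ j) (hb : b < 2 ^ (m - j)) (x : Fin m → Fin 2) :
    shiftedVdcPoint m σ (fun i => x i) ∈ dyadicRect j a (m - j) b ↔
      rectIndex σ hj x = (⟨a, ha⟩, ⟨b, hb⟩) := by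
  have hfst : (fstNumerator x : ℝ) / 2 ^ m ∈ Set.Ico ((a : ℝ) / 2 ^ j) ((a + 1) / 2 ^ j) ↔
      fstNumerator x / 2 ^ (m - j) = a := by
    rw [← Nat.cast_div_two_pow_add_mem_Ico_iff (K := ℝ), Nat.add_sub_cancel' hj]
  have hsnd : (sndNumerator σ x : ℝ) / 2 ^ m ∈
      Set.Ico ((b : ℝ) / 2 ^ (m - j)) ((b + 1) / 2 ^ (m - j)) ↔
        sndNumerator σ x / 2 ^ j = b := by
    rw [← Nat.cast_div_two_pow_add_mem_Ico_iff (K := ℝ), Nat.sub_add_cancel hj]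
  rw [shiftedVdcPoint_eq, dyadicRect, Set.mem_prod, hfst, hsnd, rectIndex, Prod.ext_iff,
    Fin.ext_iff, Fin.ext_iff]

end ShiftedVdc

theorem shifted_vanDerCorput_is_net_general (m : ℕ) (σ : Fin m → ℕ) :
    ({p : ℝ × ℝ | ∃ x : Fin m → ℕ, (∀ i, x i < 2) ∧ p = shiftedVdcPoint m σ x}).ncard
      = 2 ^ m ∧
    ∀ j ≤ m, ∀ a < 2 ^ j, ∀ b < 2 ^ (m - j),
      ∃! p : ℝ × ℝ, (∃ x : Fin m → ℕ, (∀ i, x i < 2) ∧ p = shiftedVdcPoint m σ x) ∧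
        p ∈ dyadicRect j a (m - j) b := by
  have mem_points_iff (p : ℝ × ℝ) :
      (∃ x : Fin m → ℕ, (∀ i, x i < 2) ∧ p = shiftedVdcPoint m σ x) ↔
        ∃ x : Fin m → Fin 2, shiftedVdcPoint m σ (fun i => x i) = p :=
    ⟨fun ⟨x, hx, hp⟩ => ⟨fun i => ⟨x i, hx i⟩, hp.symm⟩,
      fun ⟨x, hp⟩ => ⟨_, fun i => (x i).isLt, hp.symm⟩⟩
  simp only [mem_points_iff]
  refine ⟨?_, fun j hj a ha b hb => ?_⟩
  · exact (Set.ncard_range_of_injective (ShiftedVdc.shiftedVdcPoint_injective σ)).trans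
      (by simp)
  · obtain ⟨x, hx⟩ := (ShiftedVdc.rectIndex_bijective σ hj).2 (⟨a, ha⟩, ⟨b, hb⟩)
    have mem_iff := ShiftedVdc.shiftedVdcPoint_mem_dyadicRect_iff σ hj ha hb
    refine ⟨_, ⟨⟨x, rfl⟩, (mem_iff x).2 hx⟩, ?_⟩
    rintro _ ⟨⟨y, rfl⟩, hy⟩
    rw [(ShiftedVdc.rectIndex_bijective σ hj).1 (((mem_iff y).1 hy).trans hx.symm)]

/-- For any digit shift `σ ∈ {0,1}^m`, the digit-shifted Van der Corput set of `2^m` points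
is a binary `(0,m,2)`-net: every dyadic rectangle of area `2^{-m}` contains exactly one of
its points. -/
theorem shifted_vanDerCorput_is_net (m : ℕ) (σ : Fin m → ℕ) (hσ : ∀ i, σ i < 2) :
    ({p : ℝ × ℝ | ∃ x : Fin m → ℕ, (∀ i, x i < 2) ∧ p = shiftedVdcPoint m σ x}).ncard
      = 2 ^ m ∧
    ∀ j ≤ m, ∀ a < 2 ^ j, ∀ b < 2 ^ (m - j),
      ∃! p : ℝ × ℝ, (∃ x : Fin m → ℕ, (∀ i, x i < 2) ∧ p = shiftedVdcPoint m σ x) ∧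
        p ∈ dyadicRect j a (m - j) b :=
  shifted_vanDerCorput_is_net_general m σ
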